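/- arXiv:1804.05297 — 2 statements merged into one kernel-verified Lean document; each statement's English description precedes it below -/
import Mathlib

section
/- Let (g_v)_{v ∈ ℤ_{≥0}^N} be a family of formal power series in K[[x_1, …, x_N]]. Then the following are equivalent: (a) there exist real numbers r, s > 1 such that every g_v · v! lies in K{r^{-1}x} and ‖g_v · v!‖_r · s^{|v|} is bounded over v; (b) there exist real numbers r, s > 1 such that every g_v · π^{|v|} lies in K{r^{-1}x} and ‖g_v · π^{|v|}‖_r · s^{|v|} is bounded over v. (This is the identity 𝔅^† = 𝒟^†, where 𝔅^† is the set of operators Σ_v f_v(x) ∂^v/v! and 𝒟^† the set of operators Σ_v f_v(x) ∂^v/π^{|v|}, with f_v ∈ K{r^{-1}x} and ‖f_v‖_r s^{|v|} bounded for some r, s > 1; it is the key step in identifying 𝒟^† with Γ(ℙ^N, 𝒟^†_{ℙ^N,ℚ}(∞)).) -/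
open scoped BigOperators

/-- A family of formal power series in `N` variables, given by its coefficients:
`g v u` is the coefficient of `x^u` in the series `g_v`. -/
abbrev CoeffFamily (N : ℕ) (K : Type*) := (Fin N → ℕ) → (Fin N → ℕ) → K

/-!
Legendre's formula `(p - 1) v_p(n!) = n - s_p(n)`, where `s_p` is the base-`p` digit sum, together
with `‖π‖ ^ (p - 1) = ‖p‖ = p⁻¹` gives `‖n!‖ = ‖π‖ ^ (n - s_p(n))`; here the norm of `K` restricts
to the `p`-adic norm on `ℚ` by Ostrowski's theorem. As `s_p(n)` is at most `p - 1` times the number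
of digits of `n`, this yields `‖π‖ ^ n ≤ ‖n!‖ ≤ p (n + 1) ‖π‖ ^ n`. So the weights `v!` and `π^|v|`
differ by at most a polynomial factor in `|v|`, which is absorbed by replacing `s` with `√s`.
-/

open Finset Nat

lemma charZero_of_norm_natCast_ne_one {K : Type*} [NormedField K] {n : ℕ} (h0 : (n : K) ≠ 0)
    (h1 : ‖(n : K)‖ ≠ 1) : CharZero K := by
  obtain ⟨q, hq⟩ := CharP.exists K
  rcases CharP.char_is_prime_or_zero K q with hqp | rfl
  · have := Fact.mk hqp
    have hn : (n : ZMod q) ≠ 0 := fun h => h0 <| by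
      rw [← map_natCast (ZMod.castHom dvd_rfl K), h, map_zero]
    have hfermat := congrArg (fun x => ‖ZMod.castHom dvd_rfl K x‖)
      (ZMod.pow_card_sub_one_eq_one hn)
    simp only [map_pow, map_natCast, map_one, norm_pow, norm_one] at hfermat
    exact absurd ((pow_eq_one_iff_of_nonneg (norm_nonneg _) (by have := hqp.two_le; omega)).mp
      hfermat) h1
  · exact CharP.charP_to_charZero K

lemma norm_ratCast_eq_padicNorm {K : Type*} [NormedField K] {p : ℕ} [hp : Fact p.Prime]
    (hnormp : ‖(p : K)‖ = (p : ℝ)⁻¹) (x : ℚ) : ‖(x : K)‖ = padicNorm p x := by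
  have hp1 : (1 : ℝ) < p := by exact_mod_cast hp.out.one_lt
  have hnormp_lt : ‖(p : K)‖ < 1 := hnormp ▸ inv_lt_one_of_one_lt₀ hp1
  have hp0 : (p : K) ≠ 0 := by
    rw [← norm_ne_zero_iff, hnormp]; positivity
  have : CharZero K := charZero_of_norm_natCast_ne_one hp0 hnormp_lt.ne
  let f : AbsoluteValue ℚ ℝ :=
    { toFun x := ‖(x : K)‖
      map_mul' := by simp
      nonneg' _ := norm_nonneg _
      eq_zero' := by simp
      add_le' x y := by simpa using norm_add_le (x : K) y }
  have hfp : f p = ‖(p : K)‖ := by simp [f]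
  have hnt : f.IsNontrivial := ⟨p, by exact_mod_cast hp.out.ne_zero, hfp ▸ hnormp_lt.ne⟩
  have hfp_pow {c : ℝ} (hc : 0 < c) : f p ^ c < 1 :=
    Real.rpow_lt_one (f.nonneg _) (hfp ▸ hnormp_lt) hc
  rcases Rat.AbsoluteValue.equiv_real_or_padic f hnt with hreal | ⟨q, ⟨hq, hfq⟩, -⟩
  · obtain ⟨c, hc, hfc⟩ := AbsoluteValue.isEquiv_iff_exists_rpow_eq.mp hreal
    have := congrFun hfc p
    simp only [Rat.AbsoluteValue.real_eq_abs, Rat.cast_natCast, Nat.abs_cast] at this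
    exact absurd (this ▸ hfp_pow hc) hp1.not_gt
  obtain ⟨c, hc, hfc⟩ := AbsoluteValue.isEquiv_iff_exists_rpow_eq.mp hfq
  have hcp := congrFun hfc p
  simp only [Rat.AbsoluteValue.padic_eq_padicNorm] at hcp
  obtain rfl : p = q := by
    by_contra hpq
    rw [(padicNorm.nat_eq_one_iff _).mpr fun h =>
      hpq ((Nat.prime_dvd_prime_iff_eq hq.out hp.out).mp h).symm, Rat.cast_one] at hcp
    exact (hfp_pow hc).ne hcp
  obtain rfl : c = 1 := by
    rw [padicNorm.padicNorm_p_of_prime, hfp, hnormp, Rat.cast_inv, Rat.cast_natCast,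
      ← Real.rpow_one (p : ℝ)⁻¹, ← Real.rpow_mul (by positivity), one_mul] at hcp
    exact (Real.rpow_right_inj (by positivity) (inv_lt_one_of_one_lt₀ hp1).ne).mp hcp
  simpa [f] using congrFun hfc x

lemma exists_add_one_le_mul_pow {σ : ℝ} (hσ : 1 < σ) :
    ∃ B : ℝ, 0 ≤ B ∧ ∀ n : ℕ, (n : ℝ) + 1 ≤ B * σ ^ n := by
  have hx : 0 < σ - 1 := sub_pos.mpr hσ
  refine ⟨1 + (σ - 1)⁻¹, by positivity, fun n => ?_⟩
  have hbernoulli : 1 + n * (σ - 1) ≤ σ ^ n := by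
    simpa using one_add_mul_le_pow (by linarith : (-2 : ℝ) ≤ σ - 1) n
  calc (n : ℝ) + 1 ≤ (1 + (σ - 1)⁻¹) * (1 + n * (σ - 1)) := by
        rw [add_mul, one_mul, mul_add, mul_one, mul_left_comm, inv_mul_cancel₀ hx.ne', mul_one]
        nlinarith [inv_pos.mpr hx, Nat.cast_nonneg (α := ℝ) n]
    _ ≤ (1 + (σ - 1)⁻¹) * σ ^ n := by gcongr

lemma norm_prod_le_of_norm_le {K ι : Type*} [NormedField K] [Fintype ι] {α β : ℕ → K} {A σ : ℝ}
    (h : ∀ n, ‖α n‖ ≤ A * σ ^ n * ‖β n‖) (v : ι → ℕ) :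
    ‖∏ j, α (v j)‖ ≤ A ^ Fintype.card ι * σ ^ (∑ j, v j) * ‖∏ j, β (v j)‖ := by
  rw [norm_prod, norm_prod]
  calc ∏ j, ‖α (v j)‖ ≤ ∏ j, (A * σ ^ v j * ‖β (v j)‖) :=
        prod_le_prod (fun _ _ => norm_nonneg _) fun j _ => h (v j)
    _ = _ := by
      rw [prod_mul_distrib, prod_mul_distrib, prod_const, prod_pow_eq_pow_sum, Finset.card_univ]

lemma Nat.digits_sum_le_mul_length {b : ℕ} (hb : 1 < b) (n : ℕ) :
    (b.digits n).sum ≤ (b - 1) * (b.digits n).length := by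
  simpa [mul_comm] using List.sum_le_card_nsmul _ _ fun d hd =>
    Nat.le_sub_one_of_lt (Nat.digits_lt_base hb hd)

theorem norm_pow_sub_one_eq_inv {K : Type*} [NormedField K] {p : ℕ}
    (hnormp : ‖(p : K)‖ = (p : ℝ)⁻¹) {π : K} (hπ : π ^ (p - 1) = -(p : K)) :
    ‖π‖ ^ (p - 1) = (p : ℝ)⁻¹ := by
  rw [← norm_pow, hπ, norm_neg, hnormp]

section Factorial

variable {K : Type*} [NormedField K] {p : ℕ} [hp : Fact p.Prime] (hnormp : ‖(p : K)‖ = (p : ℝ)⁻¹)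
  {π : K} (hπ : π ^ (p - 1) = -(p : K))
include hnormp hπ

theorem norm_factorial_eq_norm_pow (n : ℕ) : ‖(n ! : K)‖ = ‖π‖ ^ (n - (p.digits n).sum) := by
  rw [← sub_one_mul_padicValNat_factorial, pow_mul, norm_pow_sub_one_eq_inv hnormp hπ,
    ← Rat.cast_natCast, norm_ratCast_eq_padicNorm hnormp,
    padicNorm.eq_zpow_of_nonzero (by positivity)]
  push_cast
  rw [zpow_neg, ← padicValRat_of_nat, zpow_natCast, inv_pow]

theorem norm_le_one_of_pow_eq_neg_prime : ‖π‖ ≤ 1 := by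
  have hp1 : p - 1 ≠ 0 := by have := hp.out.two_le; omega
  refine (pow_le_one_iff_of_nonneg (norm_nonneg π) hp1).mp ?_
  rw [norm_pow_sub_one_eq_inv hnormp hπ]
  exact inv_le_one_of_one_le₀ (by exact_mod_cast hp.out.one_le)

theorem pow_le_norm_factorial (n : ℕ) : ‖π‖ ^ n ≤ ‖(n ! : K)‖ := by
  rw [norm_factorial_eq_norm_pow hnormp hπ]
  exact pow_le_pow_of_le_one (norm_nonneg π) (norm_le_one_of_pow_eq_neg_prime hnormp hπ)
    (Nat.sub_le _ _)

theorem norm_factorial_le (n : ℕ) : ‖(n ! : K)‖ ≤ p * (n + 1) * ‖π‖ ^ n := by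
  set L := (p.digits n).length
  have hL : (p : ℝ) ^ L ≤ p * (n + 1) := by
    exact_mod_cast (Nat.pow_le_pow_right hp.out.pos (Nat.le_length_digits_le p n (n + 1)
      n.le_succ)).trans (Nat.base_pow_length_digits_le p (n + 1) hp.out.one_lt n.succ_ne_zero)
  calc ‖(n ! : K)‖ = ‖π‖ ^ (n - (p.digits n).sum) * ‖π‖ ^ ((p - 1) * L) * p ^ L := by
        rw [pow_mul, norm_pow_sub_one_eq_inv hnormp hπ, inv_pow, mul_assoc,
          inv_mul_cancel₀ (pow_pos (by exact_mod_cast hp.out.pos) L).ne', mul_one,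
          norm_factorial_eq_norm_pow hnormp hπ]
    _ ≤ ‖π‖ ^ (n - (p.digits n).sum) * ‖π‖ ^ (p.digits n).sum * p ^ L := by
        gcongr _ * ?_ * _
        exact pow_le_pow_of_le_one (norm_nonneg π) (norm_le_one_of_pow_eq_neg_prime hnormp hπ)
          (Nat.digits_sum_le_mul_length hp.out.one_lt n)
    _ = p ^ L * ‖π‖ ^ n := by
        rw [← pow_add, Nat.sub_add_cancel (Nat.digit_sum_le p n), mul_comm]
    _ ≤ p * (n + 1) * ‖π‖ ^ n := by gcongr

theorem norm_pow_sum_le_norm_prod_factorial {ι : Type*} [Fintype ι] (v : ι → ℕ) :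
    ‖π ^ ∑ j, v j‖ ≤ ‖((∏ j, (v j)! : ℕ) : K)‖ := by
  rw [Nat.cast_prod, norm_prod, norm_pow, ← prod_pow_eq_pow_sum]
  exact prod_le_prod (fun _ _ => by positivity) fun j _ => pow_le_norm_factorial hnormp hπ (v j)

theorem exists_norm_prod_factorial_le {ι : Type*} [Fintype ι] {σ : ℝ} (hσ : 1 < σ) :
    ∃ A : ℝ, 0 ≤ A ∧ ∀ v : ι → ℕ,
      ‖((∏ j, (v j)! : ℕ) : K)‖ ≤ A * σ ^ (∑ j, v j) * ‖π ^ ∑ j, v j‖ := by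
  obtain ⟨B, hB, hBσ⟩ := exists_add_one_le_mul_pow hσ
  refine ⟨(p * B) ^ Fintype.card ι, by positivity, fun v => ?_⟩
  have hfactorial (n : ℕ) : ‖(n ! : K)‖ ≤ p * B * σ ^ n * ‖π ^ n‖ :=
    calc ‖(n ! : K)‖ ≤ p * (n + 1) * ‖π‖ ^ n := norm_factorial_le hnormp hπ n
      _ ≤ p * (B * σ ^ n) * ‖π‖ ^ n := by gcongr; exact hBσ n
      _ = p * B * σ ^ n * ‖π ^ n‖ := by rw [norm_pow]; ring
  simpa only [Nat.cast_prod, prod_pow_eq_pow_sum] using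
    norm_prod_le_of_norm_le (α := fun n => (n ! : K)) hfactorial v

end Factorial

/-- For `c v = v!` (resp. `π ^ |v|`) this says that `∑ g_v ∂^v` lies in `𝔅^†` (resp. `𝒟^†`). -/
def DaggerBounded {N : ℕ} {K : Type*} [NormedField K] (c : (Fin N → ℕ) → K)
    (g : CoeffFamily N K) : Prop :=
  ∃ r s : ℝ, 1 < r ∧ 1 < s ∧ ∃ C : ℝ, ∀ v u : Fin N → ℕ,
    ‖c v * g v u‖ * r ^ (∑ j, u j) * s ^ (∑ j, v j) ≤ C

theorem DaggerBounded.of_norm_le {N : ℕ} {K : Type*} [NormedField K] {a b : (Fin N → ℕ) → K}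
    {g : CoeffFamily N K}
    (hab : ∀ σ : ℝ, 1 < σ → ∃ A : ℝ, 0 ≤ A ∧ ∀ v, ‖a v‖ ≤ A * σ ^ (∑ j, v j) * ‖b v‖)
    (hb : DaggerBounded b g) : DaggerBounded a g := by
  obtain ⟨r, s, hr, hs, C, hC⟩ := hb
  have hs0 : 0 ≤ s := by linarith
  obtain ⟨A, hA, hAab⟩ := hab √s (Real.lt_sqrt zero_le_one |>.mpr (by simpa using hs))
  refine ⟨r, √s, hr, Real.lt_sqrt zero_le_one |>.mpr (by simpa using hs), A * C, fun v u => ?_⟩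
  calc ‖a v * g v u‖ * r ^ (∑ j, u j) * √s ^ (∑ j, v j)
      ≤ A * √s ^ (∑ j, v j) * ‖b v‖ * ‖g v u‖ * r ^ (∑ j, u j) * √s ^ (∑ j, v j) := by
        rw [norm_mul]; gcongr; exact hAab v
    _ = A * (‖b v * g v u‖ * r ^ (∑ j, u j) * (√s * √s) ^ (∑ j, v j)) := by
        rw [norm_mul, mul_pow]; ring
    _ ≤ A * C := by rw [Real.mul_self_sqrt hs0]; gcongr; exact hC v u

/-- `𝔅^† = 𝒟^†`: for a family `(g_v)` of formal power series over a finite extension `K` of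
`ℚ_p` (with `π^(p-1) = -p`), there exist `r, s > 1` such that every `g_v · v!` lies in
`K{r⁻¹x}` with `‖g_v · v!‖_r s^{|v|}` bounded, if and only if there exist `r, s > 1` such that
every `g_v · π^{|v|}` lies in `K{r⁻¹x}` with `‖g_v · π^{|v|}‖_r s^{|v|}` bounded. -/
theorem stmt5 (p N : ℕ) (hp : p.Prime)
    (K : Type*) [NormedField K]
    (hnormp : ‖(p : K)‖ = ((p : ℝ))⁻¹)
    (π : K) (hπ : π ^ (p - 1) = -(p : K))
    (g : CoeffFamily N K) :
    (∃ r s : ℝ, 1 < r ∧ 1 < s ∧ ∃ C : ℝ, ∀ v u : Fin N → ℕ,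
        ‖((∏ j, (v j).factorial : ℕ) : K) * g v u‖ * r ^ (∑ j, u j) * s ^ (∑ j, v j) ≤ C) ↔
    (∃ r s : ℝ, 1 < r ∧ 1 < s ∧ ∃ C : ℝ, ∀ v u : Fin N → ℕ,
        ‖π ^ (∑ j, v j) * g v u‖ * r ^ (∑ j, u j) * s ^ (∑ j, v j) ≤ C) := by
  have : Fact p.Prime := ⟨hp⟩
  change DaggerBounded (fun v => ((∏ j, (v j)! : ℕ) : K)) g ↔
    DaggerBounded (fun v => π ^ ∑ j, v j) g
  constructor
  · refine DaggerBounded.of_norm_le fun σ hσ => ⟨1, zero_le_one, fun v => ?_⟩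
    rw [one_mul]
    exact (norm_pow_sum_le_norm_prod_factorial hnormp hπ v).trans
      (le_mul_of_one_le_left (norm_nonneg _) (one_le_pow₀ hσ.le))
  · exact DaggerBounded.of_norm_le fun σ hσ => exists_norm_prod_factorial_le hnormp hπ hσ
end

section
/- The K-algebra homomorphism φ : K⟨x, y⟩^† → L^{†′} determined by x_i ↦ x_i (i = 1, …, N) and y_j ↦ t^{w_j} (j = 1, …, N), i.e. sending Σ_v f_v(x) y^v to Σ_v f_v(x) t^{v_1 w_1 + ⋯ + v_N w_N}, is surjective. -/
open scoped Pointwise BigOperators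

section

variable (n N : ℕ)

/-- The convex polyhedral cone `δ ⊆ ℝ^n` generated by the integer vectors `w_1, …, w_N`. -/
def cone (w : Fin N → Fin n → ℤ) : Set (Fin n → ℝ) :=
  {x | ∃ c : Fin N → ℝ, (∀ j, 0 ≤ c j) ∧ x = ∑ j, c j • fun i => ((w j i : ℝ))}

/-- The polytope `Δ ⊆ ℝ^n`, the convex hull of `{0, w_1, …, w_N}`. -/
def poly (w : Fin N → Fin n → ℤ) : Set (Fin n → ℝ) :=
  convexHull ℝ (insert 0 (Set.range fun j => fun i => ((w j i : ℝ))))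

/-- The gauge `d(x) = inf {a > 0 | x ∈ aΔ}`. -/
noncomputable def dg (w : Fin N → Fin n → ℤ) (x : Fin n → ℝ) : ℝ :=
  sInf {a : ℝ | 0 < a ∧ x ∈ a • poly n N w}

/-- Formal series `Σ a_{v,m} x^v t^m`, by coefficients. -/
abbrev Ser (K : Type*) := ((Fin N → ℕ) × (Fin n → ℤ)) → K

variable {K : Type*} [NormedField K]

/-- Membership in `K⟨x,y⟩^†`: `b u v` is the coefficient of `x^u y^v`, and
`|b_{u,v}| r^{|u|} s^{|v|}` is bounded for some `r, s > 1`. -/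
def memKxy (b : (Fin N → ℕ) × (Fin N → ℕ) → K) : Prop :=
  ∃ r s : ℝ, 1 < r ∧ 1 < s ∧ ∃ C : ℝ, ∀ u v : Fin N → ℕ,
    ‖b (u, v)‖ * r ^ (∑ j, u j) * s ^ (∑ j, v j) ≤ C

/-- Membership in `L^{†′}`: the series is supported (in the `t`-variable) on the monoid
`C(A) = {k_1 w_1 + ⋯ + k_N w_N : k_j ∈ ℤ_{≥0}}` and `|a_{v,m}| r^{|v|} s^{d(m)}` is bounded
for some `r, s > 1`. -/
def memL' (w : Fin N → Fin n → ℤ) (a : Ser n N K) : Prop :=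
  (∀ v m, a (v, m) ≠ 0 → ∃ k : Fin N → ℕ, m = ∑ j, (k j : ℤ) • w j) ∧
  ∃ r s : ℝ, 1 < r ∧ 1 < s ∧ ∃ C : ℝ, ∀ v m,
    ‖a (v, m)‖ * r ^ (∑ j, v j) * s ^ dg n N w (fun i => ((m i : ℝ))) ≤ C

/-- The `K`-algebra homomorphism `φ : K⟨x,y⟩^† → L^{†′}` with `x_i ↦ x_i`, `y_j ↦ t^{w_j}`:
it sends `Σ_v f_v(x) y^v` to `Σ_v f_v(x) t^{v_1 w_1 + ⋯ + v_N w_N}`. -/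
noncomputable def phiMap (w : Fin N → Fin n → ℤ)
    (b : (Fin N → ℕ) × (Fin N → ℕ) → K) : Ser n N K := fun um =>
  ∑' v : Fin N → ℕ, if (∑ j, (v j : ℤ) • w j) = um.2 then b (um.1, v) else 0

end

/-!
Every `m ∈ C(A)` has a representation `m = ∑ k_j w_j` with `∑ k_j ≤ α (d(m) + 1)`; putting the
coefficient `a_{u,m}` on `x^u y^k` for one such `k` per `m` gives a preimage, with radius
`s^{1/α}` in `y`.

Take a representation of minimal length, so that no nonzero relation `h ∈ ℕ^N` with
`∑ h_j w_j = 0` satisfies `h ≤ k`. For a set `J` of indices, either `0` lies in the convex hull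
of `{w_j : j ∈ J}`, and then (the `w_j` being integral) a nonzero relation is supported on `J`,
or a linear form `f` is `≥ 1` on these `w_j`. Among the finitely many `J`, the relations and the
norms of the forms are uniformly bounded, by `C` and `F` say. On `J = {j : k_j ≥ C_j}` no relation
can exist, so `∑_{j ∈ J} k_j ≤ f(m) + O(1) ≤ F ‖m‖ + O(1)`, while `k_j < C_j` off `J`. Finally
`‖m‖ ≤ (d(m) + 1) R` for a radius `R` of a ball containing `Δ`.
-/

open Finset

lemma Finite.exists_forall_exists_le {α γ β : Type*} [Finite α] [Nonempty β] [Preorder β]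
    [IsDirectedOrder β] (P : α → γ → Prop) (g : γ → β) :
    ∃ M, ∀ a, (∃ x, P a x) → ∃ x, P a x ∧ g x ≤ M := by
  classical
  have : ∀ a, ∃ b, (∃ x, P a x) → ∃ x, P a x ∧ g x ≤ b := fun a => by
    by_cases h : ∃ x, P a x
    · obtain ⟨x, hx⟩ := h
      exact ⟨g x, fun _ => ⟨x, hx, le_rfl⟩⟩
    · exact ⟨Classical.arbitrary β, fun h' => absurd h' h⟩
  choose b hb using this
  obtain ⟨M, hM⟩ := Finite.exists_le b
  exact ⟨M, fun a ha => (hb a ha).imp fun _ hx => ⟨hx.1, hx.2.trans (hM a)⟩⟩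

section Relations

variable {ι : Type*} [Fintype ι] {n : ℕ}

def natCombination (w : ι → Fin n → ℤ) (k : ι → ℕ) : Fin n → ℤ := ∑ i, (k i : ℤ) • w i

def realVec (v : Fin n → ℤ) : Fin n → ℝ := fun i => v i

lemma realVec_natCombination (w : ι → Fin n → ℤ) (k : ι → ℕ) :
    realVec (natCombination w k) = ∑ i, (k i : ℝ) • realVec (w i) := by
  ext j
  simp [realVec, natCombination, Finset.sum_apply]

lemma norm_realVec (v : Fin n → ℤ) : ‖realVec v‖ = ‖v‖ := by
  simp only [realVec, Pi.norm_def]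
  congr! 2

lemma natCombination_tsub (w : ι → Fin n → ℤ) {h k : ι → ℕ} (hk : h ≤ k) :
    natCombination w (k - h) = natCombination w k - natCombination w h := by
  simp only [natCombination, ← Finset.sum_sub_distrib, ← sub_smul, Pi.sub_apply,
    Nat.cast_sub (hk _)]

lemma exists_natRelation_of_realRelation_of_eq_one (w : ι → Fin n → ℤ) {c : ι → ℝ}
    (hc : 0 ≤ c) {i₀ : ι} (hi₀ : c i₀ = 1) (hrel : ∑ i, c i • realVec (w i) = 0) :
    ∃ h : ι → ℕ, h ≠ 0 ∧ (∀ i, c i = 0 → h i = 0) ∧ natCombination w h = 0 := by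
  set g : ℕ → ι → ℕ := fun T i => ⌊T * c i⌋₊
  have hbound (T : ℕ) : natCombination w (g T) ∈ Metric.closedBall 0 (∑ i, ‖realVec (w i)‖) := by
    -- `g T` differs from the exact relation `T • c` by less than one in each coordinate
    have hdiff : ∑ i, (g T i : ℝ) • realVec (w i) =
        ∑ i, ((g T i : ℝ) - T * c i) • realVec (w i) := by
      simp [sub_smul, Finset.sum_sub_distrib, mul_smul, ← Finset.smul_sum, hrel]
    rw [mem_closedBall_zero_iff, ← norm_realVec, realVec_natCombination, hdiff]
    refine (norm_sum_le _ _).trans (Finset.sum_le_sum fun i _ => ?_)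
    rw [norm_smul]
    refine mul_le_of_le_one_left (norm_nonneg _) ?_
    have h0 : 0 ≤ (T : ℝ) * c i := mul_nonneg T.cast_nonneg (hc i)
    rw [Real.norm_eq_abs, abs_le]
    constructor <;> linarith [Nat.floor_le h0, Nat.lt_floor_add_one ((T : ℝ) * c i)]
  obtain ⟨T₁, -, T₂, -, hne, heq⟩ := Set.infinite_univ.exists_ne_map_eq_of_mapsTo
    (fun T _ => hbound T) (isCompact_closedBall _ _).finite_of_discrete
  wlog hlt : T₁ < T₂ generalizing T₁ T₂
  · exact this T₂ T₁ hne.symm heq.symm (hne.lt_or_gt.resolve_left hlt)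
  have hmono : g T₁ ≤ g T₂ := fun i =>
    Nat.floor_le_floor (mul_le_mul_of_nonneg_right (by exact_mod_cast hlt.le) (hc i))
  refine ⟨g T₂ - g T₁, fun h => ?_, fun i hi => by simp [g, hi], ?_⟩
  · have := congrFun h i₀
    simp [g, hi₀] at this
    omega
  · rw [natCombination_tsub w hmono, heq, sub_self]

lemma exists_natRelation_of_realRelation (w : ι → Fin n → ℤ) {c : ι → ℝ}
    (hc : 0 ≤ c) (hne : c ≠ 0) (hrel : ∑ i, c i • realVec (w i) = 0) :
    ∃ h : ι → ℕ, h ≠ 0 ∧ (∀ i, c i = 0 → h i = 0) ∧ natCombination w h = 0 := by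
  obtain ⟨i₀, hi₀⟩ := Function.ne_iff.1 hne
  have hpos : 0 < c i₀ := (hc i₀).lt_of_ne' hi₀
  obtain ⟨h, hh0, hsupp, hh⟩ := exists_natRelation_of_realRelation_of_eq_one w
    (c := (c i₀)⁻¹ • c) (smul_nonneg (inv_nonneg.2 hpos.le) hc) (i₀ := i₀)
    (by simp [hpos.ne']) (by simp [mul_smul, ← Finset.smul_sum, hrel])
  exact ⟨h, hh0, fun i hi => hsupp i (by simp [hi]), hh⟩

lemma exists_natRelation_or_exists_dual (w : ι → Fin n → ℤ) (J : Finset ι) :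
    (∃ h : ι → ℕ, h ≠ 0 ∧ (∀ i ∉ J, h i = 0) ∧ natCombination w h = 0) ∨
      ∃ f : StrongDual ℝ (Fin n → ℝ), ∀ i ∈ J, 1 ≤ f (realVec (w i)) := by
  classical
  set Λ : Set (ι → ℝ) := stdSimplex ℝ ι ∩ {c | ∀ i ∉ J, c i = 0}
  set S := Fintype.linearCombination ℝ (fun i => realVec (w i)) '' Λ
  by_cases h0 : (0 : Fin n → ℝ) ∈ S
  · obtain ⟨c, ⟨⟨hc0, hc1⟩, hcJ⟩, hc⟩ := h0
    have hne : c ≠ 0 := by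
      rintro rfl
      simp at hc1
    rw [Fintype.linearCombination_apply] at hc
    obtain ⟨h, hh0, hsupp, hh⟩ := exists_natRelation_of_realRelation w hc0 hne hc
    exact Or.inl ⟨h, hh0, fun i hi => hsupp i (hcJ i hi), hh⟩
  · have hΛconvex : Convex ℝ Λ :=
      (convex_stdSimplex ℝ ι).inter fun x hx y hy a b _ _ _ i hi => by simp [hx i hi, hy i hi]
    have hΛclosed : IsClosed {c : ι → ℝ | ∀ i ∉ J, c i = 0} := by
      simp only [Set.ofPred_forall]
      exact isClosed_iInter fun i => isClosed_iInter fun _ =>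
        isClosed_eq (continuous_apply i) continuous_const
    have hScompact : IsCompact S := ((isCompact_stdSimplex ℝ ι).inter_right hΛclosed).image
      (LinearMap.continuous_of_finiteDimensional _)
    obtain ⟨f, u, hf0, hfS⟩ :=
      geometric_hahn_banach_point_closed (hΛconvex.linear_image _) hScompact.isClosed h0
    have hu : 0 < u := by simpa using hf0
    refine Or.inr ⟨u⁻¹ • f, fun i hi => ?_⟩
    have hsingle : Pi.single i 1 ∈ Λ := ⟨single_mem_stdSimplex ℝ i,
      fun j hj => Pi.single_eq_of_ne (ne_of_mem_of_not_mem hi hj).symm _⟩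
    have hmem : realVec (w i) ∈ S := ⟨Pi.single i 1, hsingle, by simp⟩
    rw [FunLike.coe_smul, Pi.smul_apply, smul_eq_mul, le_inv_mul_iff₀ hu, mul_one]
    exact (hfS _ hmem).le

lemma exists_natCombination_eq_forall_natRelation_le (w : ι → Fin n → ℤ) (k : ι → ℕ) :
    ∃ k', natCombination w k' = natCombination w k ∧
      ∀ h ≤ k', natCombination w h = 0 → h = 0 := by
  obtain ⟨k', hk', hmin⟩ := (measure fun k : ι → ℕ => ∑ i, k i).wf.has_min
    {k' | natCombination w k' = natCombination w k} ⟨k, rfl⟩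
  refine ⟨k', hk', fun h hle hh => ?_⟩
  by_contra hne
  have hpos : ∑ i, h i ≠ 0 := fun h0 =>
    hne (funext fun i => (Finset.sum_eq_zero_iff.1 h0) i (mem_univ _))
  have hle' : ∑ i, h i ≤ ∑ i, k' i := Finset.sum_le_sum fun i _ => hle i
  refine hmin (k' - h) ?_ ?_
  · show natCombination w (k' - h) = natCombination w k
    rw [natCombination_tsub w hle, hh, sub_zero, hk']
  show ∑ i, (k' - h) i < ∑ i, k' i
  rw [Finset.sum_congr rfl fun i _ => Pi.sub_apply k' h i,
    Finset.sum_tsub_distrib _ fun i _ => hle i]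
  omega

lemma exists_sum_le_of_forall_natRelation_le (w : ι → Fin n → ℤ) :
    ∃ A B : ℝ, ∀ k : ι → ℕ, (∀ h ≤ k, natCombination w h = 0 → h = 0) →
      ∑ i, (k i : ℝ) ≤ A * ‖realVec (natCombination w k)‖ + B := by
  classical
  obtain ⟨C, hC⟩ := Finite.exists_forall_exists_le
    (fun (J : Finset ι) (h : ι → ℕ) => h ≠ 0 ∧ (∀ i ∉ J, h i = 0) ∧ natCombination w h = 0) id
  obtain ⟨F, hF⟩ := Finite.exists_forall_exists_le
    (fun (J : Finset ι) (f : StrongDual ℝ (Fin n → ℝ)) => ∀ i ∈ J, 1 ≤ f (realVec (w i)))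
    (‖·‖)
  refine ⟨F, ∑ i, (C i : ℝ) * (1 + F * ‖realVec (w i)‖), fun k hk => ?_⟩
  -- on the coordinates where `k` dominates every chosen relation, no relation can exist
  set J := univ.filter fun i => C i ≤ k i
  obtain hrel | hdual := exists_natRelation_or_exists_dual w J
  · obtain ⟨h, ⟨hne, hJ, hh⟩, hhC⟩ := hC J hrel
    refine absurd (hk h (fun i => ?_) hh) hne
    by_cases hi : i ∈ J
    · exact (hhC i).trans (mem_filter.1 hi).2
    · simp [hJ i hi]
  obtain ⟨f, hf, hfF⟩ := hF J hdual
  have hfw (x : Fin n → ℝ) : |f x| ≤ F * ‖x‖ :=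
    (f.le_opNorm x).trans (mul_le_mul_of_nonneg_right hfF (norm_nonneg x))
  have hF0 : 0 ≤ F := (norm_nonneg f).trans hfF
  have hpoint (i : ι) :
      (k i : ℝ) ≤ k i * f (realVec (w i)) + C i * (1 + F * ‖realVec (w i)‖) := by
    have hk0 : (0 : ℝ) ≤ k i := k i |>.cast_nonneg
    have hC0 : (0 : ℝ) ≤ C i * (F * ‖realVec (w i)‖) := by positivity
    have habs := abs_le.1 (hfw (realVec (w i)))
    by_cases hi : C i ≤ k i
    · nlinarith [hf i (mem_filter.2 ⟨mem_univ _, hi⟩)]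
    · have hkC : (k i : ℝ) ≤ C i := by exact_mod_cast (not_le.1 hi).le
      nlinarith
  calc ∑ i, (k i : ℝ)
      ≤ ∑ i, (k i * f (realVec (w i)) + C i * (1 + F * ‖realVec (w i)‖)) :=
        Finset.sum_le_sum fun i _ => hpoint i
    _ = f (realVec (natCombination w k)) + ∑ i, (C i : ℝ) * (1 + F * ‖realVec (w i)‖) := by
        simp [Finset.sum_add_distrib, realVec_natCombination, map_sum]
    _ ≤ F * ‖realVec (natCombination w k)‖ + ∑ i, (C i : ℝ) * (1 + F * ‖realVec (w i)‖) := by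
        gcongr
        exact (le_abs_self _).trans (hfw _)

end Relations

section Gauge

variable {n N : ℕ} (w : Fin N → Fin n → ℤ)

lemma dg_nonneg (x : Fin n → ℝ) : 0 ≤ dg n N w x :=
  Real.sInf_nonneg fun _ ha => ha.1.le

lemma norm_le_of_mem_poly {x : Fin n → ℝ} (hx : x ∈ poly n N w) :
    ‖x‖ ≤ ∑ j, ‖realVec (w j)‖ := by
  refine mem_closedBall_zero_iff.1 (convexHull_min ?_ (convex_closedBall 0 _) hx)
  rintro _ (rfl | ⟨j, rfl⟩)
  · exact Metric.mem_closedBall_self (by positivity)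
  · exact mem_closedBall_zero_iff.2
      (single_le_sum (f := fun j => ‖realVec (w j)‖) (fun j _ => norm_nonneg _) (mem_univ j))

lemma realVec_natCombination_mem_smul_poly (k : Fin N → ℕ) :
    realVec (natCombination w k) ∈ (∑ j, (k j : ℝ) + 1) • poly n N w := by
  set S := ∑ j, (k j : ℝ) + 1
  have hS : 0 < S := by positivity
  rw [Set.mem_smul_set_iff_inv_smul_mem₀ hS.ne']
  refine mem_convexHull_of_exists_fintype (fun o : Option (Fin N) => o.elim S⁻¹ fun j => k j / S)
    (fun o => o.elim 0 fun j => realVec (w j)) ?_ ?_ ?_ ?_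
  · rintro (_ | j) <;> simp only [Option.elim] <;> positivity
  · simp only [Fintype.sum_option, Option.elim, ← Finset.sum_div]
    field_simp
    ring
  · rintro (_ | j)
    · exact Set.mem_insert _ _
    · exact Set.mem_insert_of_mem _ ⟨j, rfl⟩
  · simp [Fintype.sum_option, realVec_natCombination, Finset.smul_sum, smul_smul, div_eq_inv_mul]

lemma norm_le_dg_add_one_mul (k : Fin N → ℕ) :
    ‖realVec (natCombination w k)‖ ≤
      (dg n N w (realVec (natCombination w k)) + 1) * ∑ j, ‖realVec (w j)‖ := by
  have hne : {a : ℝ | 0 < a ∧ realVec (natCombination w k) ∈ a • poly n N w}.Nonempty :=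
    ⟨_, by positivity, realVec_natCombination_mem_smul_poly w k⟩
  obtain ⟨a, ⟨ha, x, hx, hax⟩, hlt⟩ := Real.lt_sInf_add_pos hne one_pos
  have had : a ≤ dg n N w (realVec (natCombination w k)) + 1 := hlt.le
  calc ‖realVec (natCombination w k)‖ = a * ‖x‖ := by
        rw [← hax, norm_smul, Real.norm_of_nonneg ha.le]
    _ ≤ _ := mul_le_mul had (norm_le_of_mem_poly w hx) (norm_nonneg _) (by linarith)

lemma exists_natCombination_eq_sum_le :
    ∃ α > 0, ∀ k : Fin N → ℕ, ∃ k', natCombination w k' = natCombination w k ∧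
      ∑ j, (k' j : ℝ) ≤ α * (dg n N w (realVec (natCombination w k)) + 1) := by
  obtain ⟨A, B, hAB⟩ := exists_sum_le_of_forall_natRelation_le w
  set R := ∑ j, ‖realVec (w j)‖
  refine ⟨|A| * R + |B| + 1, by positivity, fun k => ?_⟩
  obtain ⟨k', hk', hmin⟩ := exists_natCombination_eq_forall_natRelation_le w k
  refine ⟨k', hk', ?_⟩
  have hk'A := hAB k' hmin
  rw [hk'] at hk'A
  set d := dg n N w (realVec (natCombination w k))
  have hd : 0 ≤ d := dg_nonneg w _
  have hR : 0 ≤ R := by positivity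
  have hA : A * ‖realVec (natCombination w k)‖ ≤ |A| * ((d + 1) * R) :=
    (mul_le_mul_of_nonneg_right (le_abs_self A) (norm_nonneg _)).trans
      (mul_le_mul_of_nonneg_left (norm_le_dg_add_one_mul w k) (abs_nonneg A))
  nlinarith [le_abs_self B, abs_nonneg A, abs_nonneg B]

lemma exists_natCombination_section :
    ∃ α > 0, ∃ ρ : (Fin n → ℤ) → Fin N → ℕ, ∀ k,
      natCombination w (ρ (natCombination w k)) = natCombination w k ∧
      ∑ j, (ρ (natCombination w k) j : ℝ) ≤ α * (dg n N w (realVec (natCombination w k)) + 1) := by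
  obtain ⟨α, hα, hshort⟩ := exists_natCombination_eq_sum_le w
  have (m : Fin n → ℤ) : ∃ k', (∃ k, natCombination w k = m) →
      natCombination w k' = m ∧ ∑ j, (k' j : ℝ) ≤ α * (dg n N w (realVec m) + 1) := by
    by_cases hm : ∃ k, natCombination w k = m
    · obtain ⟨k, rfl⟩ := hm
      exact (hshort k).imp fun _ hk' _ => hk'
    · exact ⟨0, fun h => absurd h hm⟩
  choose ρ hρ using this
  exact ⟨α, hα, ρ, fun k => hρ _ ⟨k, rfl⟩⟩

end Gauge

section Lift

variable {n N : ℕ} (w : Fin N → Fin n → ℤ) {K : Type*} [NormedField K]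

/-- The candidate preimage of `a`: the coefficient `a_{u,m}` is placed on `x^u y^{ρ m}`. -/
def liftSeries (ρ : (Fin n → ℤ) → Fin N → ℕ) (a : Ser n N K) :
    (Fin N → ℕ) × (Fin N → ℕ) → K :=
  fun uv => if ρ (natCombination w uv.2) = uv.2 then a (uv.1, natCombination w uv.2) else 0

variable {w}

lemma phiMap_liftSeries {ρ : (Fin n → ℤ) → Fin N → ℕ}
    (hρ : ∀ k, natCombination w (ρ (natCombination w k)) = natCombination w k)
    {a : Ser n N K} (ha : memL' n N w a) :
    phiMap n N w (liftSeries w ρ a) = a := by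
  ext ⟨u, m⟩
  change ∑' v, (if natCombination w v = m then liftSeries w ρ a (u, v) else 0) = a (u, m)
  rw [tsum_eq_single (ρ m)]
  · by_cases hm : natCombination w (ρ m) = m
    · simp [liftSeries, hm]
    · have : a (u, m) = 0 := by
        by_contra h
        obtain ⟨k, rfl⟩ := ha.1 u m h
        exact hm (hρ k)
      simp [hm, this]
  · intro v hv
    split_ifs with hvm
    · simp [liftSeries, hvm, Ne.symm hv]
    · rfl

lemma memKxy_liftSeries {ρ : (Fin n → ℤ) → Fin N → ℕ} {α : ℝ} (hα : 0 < α)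
    (hρα : ∀ k, ∑ j, (ρ (natCombination w k) j : ℝ) ≤
      α * (dg n N w (realVec (natCombination w k)) + 1))
    {a : Ser n N K} (ha : memL' n N w a) :
    memKxy N (liftSeries w ρ a) := by
  obtain ⟨-, r, s, hr, hs, C, hC⟩ := ha
  have hs0 : 0 < s := by positivity
  have hC0 : 0 ≤ C := (by positivity : (0 : ℝ) ≤ _).trans (hC 0 0)
  refine ⟨r, s ^ α⁻¹, hr, Real.one_lt_rpow hs (inv_pos.2 hα), C * s, fun u v => ?_⟩
  by_cases hv : ρ (natCombination w v) = v
  · set d := dg n N w (realVec (natCombination w v))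
    have hexp : α⁻¹ * ((∑ j, v j : ℕ) : ℝ) ≤ d + 1 := by
      rw [inv_mul_le_iff₀ hα, Nat.cast_sum]
      simpa [hv] using hρα v
    have hpow : (s ^ α⁻¹) ^ (∑ j, v j) ≤ s ^ d * s := by
      rw [← Real.rpow_natCast, ← Real.rpow_mul hs0.le, ← Real.rpow_add_one hs0.ne']
      exact Real.rpow_le_rpow_of_exponent_le hs.le hexp
    calc ‖liftSeries w ρ a (u, v)‖ * r ^ (∑ j, u j) * (s ^ α⁻¹) ^ (∑ j, v j)
        ≤ ‖a (u, natCombination w v)‖ * r ^ (∑ j, u j) * (s ^ d * s) := by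
          simp only [liftSeries, hv, if_true]
          gcongr
      _ = ‖a (u, natCombination w v)‖ * r ^ (∑ j, u j) * s ^ d * s := by ring
      _ ≤ C * s := by
          gcongr
          exact hC u _
  · simp only [liftSeries, hv, if_false, norm_zero, zero_mul]
    positivity

end Lift

theorem stmt10_general (n N : ℕ) (w : Fin N → Fin n → ℤ)
    (K : Type*) [NormedField K] :
    ∀ a : Ser n N K, memL' n N w a →
      ∃ b : (Fin N → ℕ) × (Fin N → ℕ) → K, memKxy N b ∧ phiMap n N w b = a := by
  intro a ha
  obtain ⟨α, hα, ρ, hρ⟩ := exists_natCombination_section w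
  exact ⟨liftSeries w ρ a, memKxy_liftSeries hα (fun k => (hρ k).2) ha,
    phiMap_liftSeries (fun k => (hρ k).1) ha⟩

/-- The `K`-algebra homomorphism `φ : K⟨x,y⟩^† → L^{†′}` determined by `x_i ↦ x_i` and
`y_j ↦ t^{w_j}` is surjective. -/
theorem stmt10 (n N : ℕ) (w : Fin N → Fin n → ℤ)
    (K : Type*) [NormedField K] [CompleteSpace K] [IsUltrametricDist K] :
    ∀ a : Ser n N K, memL' n N w a →
      ∃ b : (Fin N → ℕ) × (Fin N → ℕ) → K, memKxy N b ∧ phiMap n N w b = a :=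
  stmt10_general n N w K
end
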